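/- Let (C, E, s) be an extriangulated category, I ⊆ C strongly covariantly finite, and a : X → Y a morphism. Choose s^I-triangles X → I^X → X⟨1⟩ --λ--> X and X → J^X → X⟨1⟩' --λ'--> X where X → I^X and X → J^X are left I-approximations, and form cones C^a, C^{a'}, C^{a''} of the inflations (a, i^X)^T : X → Y ⊕ I^X, (a, j^X)^T : X → Y ⊕ J^X, and (a, i^X, j^X)^T : X → Y ⊕ I^X ⊕ J^X respectively. Then C^{a''} ≅ C^a ⊕ J^X ≅ C^{a'} ⊕ I^X. In particular the cone C^a of a is uniquely determined up to isomorphism in the quotient C/[I]. -/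

import Mathlib

/-!
Since `i^X` is a left `I`-approximation, `j^X = i^X ≫ t` for some `t`, and the
automorphism `(y, i, j) ↦ (y, i, j - t i)` of `Y ⊞ I^X ⊞ J^X` turns `(a, i^X, j^X)ᵀ` into
`(a, i^X)ᵀ ≫ inl`.
By (ET4) the cone of the latter is an extension of `J^X` by `C^a` with vanishing class, hence
`C^a ⊞ J^X`; and the cone of an inflation is unique up to isomorphism. Exchanging the roles of
`I^X` and `J^X` gives the second isomorphism.
-/

set_option linter.unusedSectionVars false

open CategoryTheory CategoryTheory.Limits Opposite

universe v u

variable (C : Type u) [Category.{v} C] [Preadditive C] [HasZeroObject C] [HasBinaryBiproducts C]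

/-- An extriangulated category structure on `C` (Nakaoka–Palu): an additive bifunctor
`E : Cᵒᵖ × C ⥤ Ab` together with an additive realization of extensions by conflations,
subject to the axioms (ET1)–(ET4) and their duals.  The realization is encoded by the
predicate `conf f g δ` expressing that `X ⟶ Y ⟶ Z` realizes `δ ∈ E(Z, X)`. -/
structure ETStruct where
  /-- the extension bifunctor (ET1) -/
  E : Cᵒᵖ ⥤ C ⥤ AddCommGrpCat.{v}
  /-- `E` is additive in the contravariant variable -/
  additive_op : E.Additive
  /-- `E` is additive in the covariant variable -/
  additive : ∀ Z : Cᵒᵖ, (E.obj Z).Additive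
  /-- `conf f g δ` : the sequence `f, g` realizes the extension `δ` (it is an s-conflation) -/
  conf : ∀ ⦃X Y Z : C⦄, (X ⟶ Y) → (Y ⟶ Z) → ((E.obj (op Z)).obj X) → Prop
  /-- every extension is realized by some conflation (ET2) -/
  exists_real : ∀ ⦃X Z : C⦄ (δ : (E.obj (op Z)).obj X),
      ∃ (Y : C) (f : X ⟶ Y) (g : Y ⟶ Z), conf f g δ
  comp_zero : ∀ ⦃X Y Z : C⦄ ⦃f : X ⟶ Y⦄ ⦃g : Y ⟶ Z⦄ ⦃δ : (E.obj (op Z)).obj X⦄,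
      conf f g δ → f ≫ g = 0
  /-- realizations are well defined up to equivalence of three-term sequences -/
  conf_iso : ∀ ⦃X Y Y' Z : C⦄ ⦃f : X ⟶ Y⦄ ⦃g : Y ⟶ Z⦄ ⦃δ : (E.obj (op Z)).obj X⦄
      (e : Y ≅ Y'), conf f g δ → conf (f ≫ e.hom) (e.inv ≫ g) δ
  /-- the realization is additive: `0` is realized by the split conflation -/
  conf_zero : ∀ (X Z : C), conf (biprod.inl : X ⟶ X ⊞ Z) (biprod.snd : X ⊞ Z ⟶ Z)
      (0 : (E.obj (op Z)).obj X)
  /-- conversely, a conflation realizing `0` splits -/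
  split_of_zero : ∀ ⦃X Y Z : C⦄ ⦃f : X ⟶ Y⦄ ⦃g : Y ⟶ Z⦄,
      conf f g (0 : (E.obj (op Z)).obj X) → ∃ s : Z ⟶ Y, s ≫ g = 𝟙 Z
  /-- (ET3) -/
  et3 : ∀ ⦃X Y Z X' Y' Z' : C⦄ ⦃f : X ⟶ Y⦄ ⦃g : Y ⟶ Z⦄ ⦃δ : (E.obj (op Z)).obj X⦄
      ⦃f' : X' ⟶ Y'⦄ ⦃g' : Y' ⟶ Z'⦄ ⦃δ' : (E.obj (op Z')).obj X'⦄
      (a : X ⟶ X') (b : Y ⟶ Y'), conf f g δ → conf f' g' δ' → f ≫ b = a ≫ f' →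
      ∃ c : Z ⟶ Z', g ≫ c = b ≫ g' ∧
        (E.map c.op).app X' δ' = ((E.obj (op Z)).map a) δ
  /-- (ET3)ᵒᵖ -/
  et3op : ∀ ⦃X Y Z X' Y' Z' : C⦄ ⦃f : X ⟶ Y⦄ ⦃g : Y ⟶ Z⦄ ⦃δ : (E.obj (op Z)).obj X⦄
      ⦃f' : X' ⟶ Y'⦄ ⦃g' : Y' ⟶ Z'⦄ ⦃δ' : (E.obj (op Z')).obj X'⦄
      (b : Y ⟶ Y') (c : Z ⟶ Z'), conf f g δ → conf f' g' δ' → g ≫ c = b ≫ g' →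
      ∃ a : X ⟶ X', f ≫ b = a ≫ f' ∧
        (E.map c.op).app X' δ' = ((E.obj (op Z)).map a) δ
  /-- (ET4) -/
  et4 : ∀ ⦃X Y Z Cc Dd : C⦄ ⦃f : X ⟶ Y⦄ ⦃f' : Y ⟶ Cc⦄ ⦃δ : (E.obj (op Cc)).obj X⦄
      ⦃g : Y ⟶ Z⦄ ⦃g' : Z ⟶ Dd⦄ ⦃ε : (E.obj (op Dd)).obj Y⦄,
      conf f f' δ → conf g g' ε →
      ∃ (Ee : C) (h' : Z ⟶ Ee) (δ' : (E.obj (op Ee)).obj X) (c : Cc ⟶ Ee) (d : Ee ⟶ Dd),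
        conf (f ≫ g) h' δ' ∧ conf c d (((E.obj (op Dd)).map f') ε) ∧
        f' ≫ c = g ≫ h' ∧ h' ≫ d = g' ∧ (E.map c.op).app X δ' = δ
  /-- long-exact-sequence property: `δ` pulled back along `h` vanishes iff `h` lifts -/
  pull_zero_iff : ∀ ⦃X Y Z : C⦄ ⦃f : X ⟶ Y⦄ ⦃g : Y ⟶ Z⦄ ⦃δ : (E.obj (op Z)).obj X⦄,
      conf f g δ → ∀ ⦃W : C⦄ (h : W ⟶ Z),
        ((E.map h.op).app X δ = 0 ↔ ∃ k : W ⟶ Y, k ≫ g = h)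
  /-- long-exact-sequence property: `δ` pushed forward along `h` vanishes iff `h` extends -/
  push_zero_iff : ∀ ⦃X Y Z : C⦄ ⦃f : X ⟶ Y⦄ ⦃g : Y ⟶ Z⦄ ⦃δ : (E.obj (op Z)).obj X⦄,
      conf f g δ → ∀ ⦃W : C⦄ (h : X ⟶ W),
        (((E.obj (op Z)).map h) δ = 0 ↔ ∃ k : Y ⟶ W, f ≫ k = h)

namespace ETStruct

variable {C}
variable (T : ETStruct C)

/-- The group of `E`-extensions of `Z` by `X`. -/
abbrev ext (Z X : C) : Type v := (T.E.obj (op Z)).obj X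

/-- Push-forward `a · δ` of an extension along `a : X ⟶ X'`. -/
def push {X X' Z : C} (a : X ⟶ X') (δ : T.ext Z X) : T.ext Z X' :=
  ((T.E.obj (op Z)).map a) δ

/-- Pull-back `δ · b` of an extension along `b : Z' ⟶ Z`. -/
def pull {Z' Z X : C} (b : Z' ⟶ Z) (δ : T.ext Z X) : T.ext Z' X :=
  ((T.E.map b.op).app X) δ

/-- `δ ∈ E_I(Z, X)`: `δ` pulls back to zero from every object of `I`. -/
def memDown (I : Set C) {Z X : C} (δ : T.ext Z X) : Prop :=
  ∀ ⦃W : C⦄, W ∈ I → ∀ f : W ⟶ Z, T.pull f δ = 0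

/-- `δ ∈ E^I(Z, X)`: `δ` pushes forward to zero into every object of `I`. -/
def memUp (I : Set C) {Z X : C} (δ : T.ext Z X) : Prop :=
  ∀ ⦃W : C⦄, W ∈ I → ∀ g : X ⟶ W, T.push g δ = 0

end ETStruct

/-- `f : d ⟶ X` is a right `D`-approximation. -/
def RightApprox (D : Set C) {d X : C} (f : d ⟶ X) : Prop :=
  ∀ ⦃d' : C⦄, d' ∈ D → ∀ g : d' ⟶ X, ∃ h : d' ⟶ d, h ≫ f = g

/-- `f : X ⟶ d` is a left `D`-approximation. -/
def LeftApprox (D : Set C) {X d : C} (f : X ⟶ d) : Prop :=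
  ∀ ⦃d' : C⦄, d' ∈ D → ∀ g : X ⟶ d', ∃ h : d ⟶ d', f ≫ h = g

def ClosedSummands (D : Set C) : Prop :=
  ∀ ⦃X Y : C⦄, X ∈ D → ∀ (i : Y ⟶ X) (p : X ⟶ Y), i ≫ p = 𝟙 Y → Y ∈ D

variable {C}

namespace ETStruct

variable (T : ETStruct C)

/-- `I` is strongly contravariantly finite in `Xc`: every `X ∈ Xc` admits a deflation
from an object of `I` which is a right `I`-approximation. -/
def StronglyContraFinite (I Xc : Set C) : Prop :=
  ∀ ⦃X : C⦄, X ∈ Xc → ∃ W ∈ I, ∃ p : W ⟶ X, RightApprox C I p ∧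
    ∃ (X' : C) (i : X' ⟶ W) (δ : T.ext X X'), T.conf i p δ

/-- `I` is strongly covariantly finite in `Xc`: every `X ∈ Xc` admits an inflation
into an object of `I` which is a left `I`-approximation. -/
def StronglyCovFinite (I Xc : Set C) : Prop :=
  ∀ ⦃X : C⦄, X ∈ Xc → ∃ W ∈ I, ∃ i : X ⟶ W, LeftApprox C I i ∧
    ∃ (Z : C) (p : W ⟶ Z) (δ : T.ext Z X), T.conf i p δ

/-- `Cone_P(A, B)`: objects `Z` admitting a conflation `A' ⟶ B' ⟶ Z` whose extension
class satisfies `P` (e.g. lies in `E^I` or `E_I`), with `A' ∈ A` and `B' ∈ B`. -/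
def coneRel (P : ∀ ⦃Z X : C⦄, T.ext Z X → Prop) (A B : Set C) : Set C :=
  {Z | ∃ (A' B' : C) (_ : A' ∈ A) (_ : B' ∈ B) (f : A' ⟶ B') (g : B' ⟶ Z)
      (δ : T.ext Z A'), T.conf f g δ ∧ P δ}

/-- `CoCone_P(A, B)`: objects `W` admitting a conflation `W ⟶ A' ⟶ B'` whose extension
class satisfies `P`, with `A' ∈ A` and `B' ∈ B`. -/
def coconeRel (P : ∀ ⦃Z X : C⦄, T.ext Z X → Prop) (A B : Set C) : Set C :=
  {W | ∃ (A' B' : C) (_ : A' ∈ A) (_ : B' ∈ B) (f : W ⟶ A') (g : A' ⟶ B')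
      (δ : T.ext B' W), T.conf f g δ ∧ P δ}

/-- `E^I(A, B) = 0` (`A` in the contravariant slot). -/
def vanishUp (I A B : Set C) : Prop :=
  ∀ ⦃Z X : C⦄, Z ∈ A → X ∈ B → ∀ δ : T.ext Z X, T.memUp I δ → δ = 0

/-- `E_I(A, B) = 0` (`A` in the contravariant slot). -/
def vanishDown (I A B : Set C) : Prop :=
  ∀ ⦃Z X : C⦄, Z ∈ A → X ∈ B → ∀ δ : T.ext Z X, T.memDown I δ → δ = 0

/-- `A` is closed under extensions in `(C, E^I)`. -/
def extClosedUp (I A : Set C) : Prop :=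
  ∀ ⦃X Y Z : C⦄ ⦃f : X ⟶ Y⦄ ⦃g : Y ⟶ Z⦄ ⦃δ : T.ext Z X⦄,
    T.conf f g δ → T.memUp I δ → X ∈ A → Z ∈ A → Y ∈ A

/-- `A` is closed under extensions in `(C, E_I)`. -/
def extClosedDown (I A : Set C) : Prop :=
  ∀ ⦃X Y Z : C⦄ ⦃f : X ⟶ Y⦄ ⦃g : Y ⟶ Z⦄ ⦃δ : T.ext Z X⦄,
    T.conf f g δ → T.memDown I δ → X ∈ A → Z ∈ A → Y ∈ A

/-- `Z⟨1⟩ = Cone_{E^I}(Z, I)`. -/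
def shiftPlus (I Zc : Set C) : Set C := T.coneRel (fun _ _ δ => T.memUp I δ) Zc I

/-- `Z⟨-1⟩ = CoCone_{E_I}(I, Z)`. -/
def shiftMinus (I Zc : Set C) : Set C := T.coconeRel (fun _ _ δ => T.memDown I δ) I Zc

/-- `Ũ = CoCone_{E^I}(Z, S)`. -/
def Utilde (I Sc Zc : Set C) : Set C := T.coconeRel (fun _ _ δ => T.memUp I δ) Zc Sc

/-- `T̃ = Cone_{E_I}(V, Z)`. -/
def Ttilde (I Zc Vc : Set C) : Set C := T.coneRel (fun _ _ δ => T.memDown I δ) Vc Zc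

end ETStruct

section ConeUniqueness

open ZeroObject

lemma isIso_of_sub_id_eq_comp {A B : C} {e : A ⟶ A} {k : A ⟶ B} {m : B ⟶ A}
    (h : e - 𝟙 A = k ≫ m) (hm : m ≫ e = m) : IsIso e := by
  have he : e = 𝟙 A + k ≫ m := by rw [← h]; abel
  have hmk : m ≫ k ≫ m = 0 := by
    rw [← h, Preadditive.comp_sub, hm, Category.comp_id, sub_self]
  refine ⟨𝟙 A - k ≫ m, ?_, ?_⟩ <;>
    simp only [he, Preadditive.add_comp, Preadditive.sub_comp, Preadditive.comp_add,
      Preadditive.comp_sub, Category.id_comp, Category.comp_id, Category.assoc, hmk,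
      Limits.comp_zero] <;> abel

lemma isIso_of_isIso_comp_of_isIso_comp {A B : C} (f : A ⟶ B) (g : B ⟶ A)
    [IsIso (f ≫ g)] [IsIso (g ≫ f)] : IsIso f := by
  have : Mono f := mono_of_mono f g
  have : IsSplitEpi f := IsSplitEpi.mk' ⟨inv (g ≫ f) ≫ g, by simp⟩
  exact isIso_of_mono_of_isSplitEpi f

namespace ETStruct

variable (T : ETStruct C)

@[simp]
lemma pull_id {Z X : C} (δ : T.ext Z X) : T.pull (𝟙 Z) δ = δ := by
  simp [pull]

lemma pull_comp {A B Z X : C} (u : A ⟶ B) (v : B ⟶ Z) (δ : T.ext Z X) :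
    T.pull (u ≫ v) δ = T.pull u (T.pull v δ) := by
  simp [pull, op_comp]

lemma pull_sub {Z' Z X : C} (u v : Z' ⟶ Z) (δ : T.ext Z X) :
    T.pull (u - v) δ = T.pull u δ - T.pull v δ := by
  have := T.additive_op
  rw [pull, op_sub, Functor.map_sub, NatTrans.app_sub]
  rfl

lemma conf_id_zero (W : C) : T.conf (𝟙 W) (0 : W ⟶ 0) 0 := by
  simpa using T.conf_iso (isoBiprodZero (isZero_zero C)).symm (T.conf_zero W 0)

variable {T}

lemma exists_comp_eq_of_comp_eq_zero {X Y Z : C} {f : X ⟶ Y} {g : Y ⟶ Z} {δ : T.ext Z X}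
    (hc : T.conf f g δ) {W : C} (h : W ⟶ Y) (hh : h ≫ g = 0) :
    ∃ e : W ⟶ X, e ≫ f = h := by
  obtain ⟨e, he, -⟩ := T.et3op h (0 : (0 : C) ⟶ Z) (T.conf_id_zero W) hc (by simp [hh])
  exact ⟨e, by simpa using he.symm⟩

lemma isIso_of_inflation_comp_eq_of_comp_deflation_eq {X Y Z : C} {f : X ⟶ Y} {g : Y ⟶ Z}
    {δ : T.ext Z X} (hc : T.conf f g δ) {e : Y ⟶ Y} (hfe : f ≫ e = f) (heg : e ≫ g = g) :
    IsIso e := by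
  obtain ⟨k, hk⟩ := exists_comp_eq_of_comp_eq_zero hc (e - 𝟙 Y)
    (by rw [Preadditive.sub_comp, heg, Category.id_comp, sub_self])
  exact isIso_of_sub_id_eq_comp hk.symm hfe

lemma isIso_of_deflation_comp_eq_of_pull_eq {X Y Z : C} {f : X ⟶ Y} {g : Y ⟶ Z}
    {δ : T.ext Z X} (hc : T.conf f g δ) {c : Z ⟶ Z} (hgc : g ≫ c = g)
    (hcδ : T.pull c δ = δ) : IsIso c := by
  obtain ⟨k, hk⟩ := (T.pull_zero_iff hc (c - 𝟙 Z)).mp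
    (by rw [← pull, pull_sub, hcδ, pull_id, sub_self])
  exact isIso_of_sub_id_eq_comp hk.symm hgc

/-- The comparison maps given by (ET3) in both directions compose to automorphisms of
either cone. -/
lemma nonempty_iso_of_conf_of_conf {X Y Z₁ Z₂ : C} {f : X ⟶ Y} {g₁ : Y ⟶ Z₁}
    {g₂ : Y ⟶ Z₂} {δ₁ : T.ext Z₁ X} {δ₂ : T.ext Z₂ X} (h₁ : T.conf f g₁ δ₁)
    (h₂ : T.conf f g₂ δ₂) : Nonempty (Z₁ ≅ Z₂) := by
  obtain ⟨c, hgc, hcδ⟩ := T.et3 (𝟙 X) (𝟙 Y) h₁ h₂ (by simp)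
  obtain ⟨c', hgc', hc'δ⟩ := T.et3 (𝟙 X) (𝟙 Y) h₂ h₁ (by simp)
  replace hcδ : T.pull c δ₂ = δ₁ := by simpa [pull] using hcδ
  replace hc'δ : T.pull c' δ₁ = δ₂ := by simpa [pull] using hc'δ
  rw [Category.id_comp] at hgc hgc'
  have : IsIso (c ≫ c') := isIso_of_deflation_comp_eq_of_pull_eq h₁
    (by rw [← Category.assoc, hgc, hgc']) (by rw [pull_comp, hc'δ, hcδ])
  have : IsIso (c' ≫ c) := isIso_of_deflation_comp_eq_of_pull_eq h₂
    (by rw [← Category.assoc, hgc', hgc]) (by rw [pull_comp, hcδ, hc'δ])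
  have := isIso_of_isIso_comp_of_isIso_comp c c'
  exact ⟨asIso c⟩

lemma nonempty_iso_biprod_of_conf_zero {A E B : C} {c : A ⟶ E} {d : E ⟶ B}
    (hc : T.conf c d 0) : Nonempty (E ≅ A ⊞ B) := by
  obtain ⟨s, hs⟩ := T.split_of_zero hc
  obtain ⟨r, hr⟩ := (T.push_zero_iff hc (𝟙 A)).mp (by simp)
  have hcd : c ≫ d = 0 := T.comp_zero hc
  have : IsIso (biprod.lift r d ≫ biprod.desc c s) :=
    isIso_of_inflation_comp_eq_of_comp_deflation_eq hc
      (by simp [reassoc_of% hr, reassoc_of% hcd]) (by simp [hcd, hs])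
  have : IsIso (biprod.desc c s ≫ biprod.lift r d) :=
    isIso_of_sub_id_eq_comp (k := biprod.snd ≫ s ≫ r) (m := biprod.inl)
      (by ext <;> simp [hr, hcd, hs]) (by ext <;> simp [hr, hcd])
  have := isIso_of_isIso_comp_of_isIso_comp (biprod.lift r d) (biprod.desc c s)
  exact ⟨asIso (biprod.lift r d)⟩

/-- (ET4) applied to `f` and the split conflation `M ⟶ M ⊞ J ⟶ J` gives a conflation
`Cone f ⟶ Cone (f ≫ inl) ⟶ J` with vanishing class. -/
lemma nonempty_iso_biprod_of_conf_lift_comp {X M J Z Z₂ : C} {f : X ⟶ M} {g : M ⟶ Z}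
    {δ : T.ext Z X} (hc : T.conf f g δ) (t : M ⟶ J) {g₂ : M ⊞ J ⟶ Z₂}
    {δ₂ : T.ext Z₂ X} (hc₂ : T.conf (biprod.lift f (f ≫ t)) g₂ δ₂) : Nonempty (Z₂ ≅ Z ⊞ J) := by
  let σ : M ⊞ J ≅ M ⊞ J :=
    { hom := biprod.lift biprod.fst (biprod.snd - biprod.fst ≫ t)
      inv := biprod.lift biprod.fst (biprod.snd + biprod.fst ≫ t) }
  have hσ : biprod.lift f (f ≫ t) ≫ σ.hom = f ≫ biprod.inl := by ext <;> simp [σ]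
  have hc₂' := T.conf_iso σ hc₂
  rw [hσ] at hc₂'
  obtain ⟨E, h, _, _, _, hfh, hsplit, -⟩ := T.et4 hc (T.conf_zero M J)
  rw [map_zero] at hsplit
  obtain ⟨e₁⟩ := nonempty_iso_of_conf_of_conf hc₂' hfh
  obtain ⟨e₂⟩ := nonempty_iso_biprod_of_conf_zero hsplit
  exact ⟨e₁ ≪≫ e₂⟩

lemma nonempty_iso_biprod_of_conf_lift_lift {X Y I J Z Z'' : C} {a : X ⟶ Y} {i : X ⟶ I}
    {j : X ⟶ J} (t : I ⟶ J) (ht : i ≫ t = j) {b : Y ⊞ I ⟶ Z} {δ : T.ext Z X}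
    (hc : T.conf (biprod.lift a i) b δ) {b'' : Y ⊞ (I ⊞ J) ⟶ Z''} {δ'' : T.ext Z'' X}
    (hc'' : T.conf (biprod.lift a (biprod.lift i j)) b'' δ'') :
    Nonempty (Z'' ≅ Z ⊞ J) := by
  have hc''' := T.conf_iso (biprod.associator Y I J).symm hc''
  have hα : biprod.lift a (biprod.lift i j) ≫ (biprod.associator Y I J).symm.hom =
      biprod.lift (biprod.lift a i) (biprod.lift a i ≫ biprod.snd ≫ t) := by
    ext <;> simp [biprod.associator, ht]
  rw [hα] at hc'''
  exact nonempty_iso_biprod_of_conf_lift_comp hc _ hc'''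

end ETStruct

end ConeUniqueness

theorem statement8_general (T : ETStruct C) (I : Set C)
    {X Y IX JX : C} (a : X ⟶ Y) (hIX : IX ∈ I) (hJX : JX ∈ I)
    (iX : X ⟶ IX) (hiX : LeftApprox C I iX)
    (jX : X ⟶ JX) (hjX : LeftApprox C I jX)
    -- the three cones
    {Ca Ca' Ca'' : C}
    (b : Y ⊞ IX ⟶ Ca) (δ : T.ext Ca X)
    (hca : T.conf (biprod.lift a iX) b δ ∧ T.memUp I δ)
    (b' : Y ⊞ JX ⟶ Ca') (δ' : T.ext Ca' X)
    (hca' : T.conf (biprod.lift a jX) b' δ' ∧ T.memUp I δ')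
    (b'' : Y ⊞ (IX ⊞ JX) ⟶ Ca'') (δ'' : T.ext Ca'' X)
    (hca'' : T.conf (biprod.lift a (biprod.lift iX jX)) b'' δ'' ∧ T.memUp I δ'') :
    Nonempty (Ca'' ≅ Ca ⊞ JX) ∧ Nonempty (Ca'' ≅ Ca' ⊞ IX) := by
  obtain ⟨t, ht⟩ := hiX hJX jX
  obtain ⟨t', ht'⟩ := hjX hIX iX
  have hswap := T.conf_iso (biprod.mapIso (Iso.refl Y) (biprod.braiding IX JX)) hca''.1
  have hβ : biprod.lift a (biprod.lift iX jX) ≫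
      (biprod.mapIso (Iso.refl Y) (biprod.braiding IX JX)).hom =
      biprod.lift a (biprod.lift jX iX) := by
    ext <;> simp [biprod.braiding]
  rw [hβ] at hswap
  exact ⟨ETStruct.nonempty_iso_biprod_of_conf_lift_lift t ht hca.1 hca''.1,
    ETStruct.nonempty_iso_biprod_of_conf_lift_lift t' ht' hca'.1 hswap⟩

theorem statement8 (T : ETStruct C) (I : Set C) (hsum : ClosedSummands C I)
    (hscf : T.StronglyCovFinite I Set.univ)
    {X Y IX JX : C} (a : X ⟶ Y) (hIX : IX ∈ I) (hJX : JX ∈ I)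
    (iX : X ⟶ IX) (hiX : LeftApprox C I iX)
    (jX : X ⟶ JX) (hjX : LeftApprox C I jX)
    -- the given s^I-triangles on the left approximations
    {W₁ W₂ : C} (p : IX ⟶ W₁) (lam : T.ext W₁ X) (hlam : T.conf iX p lam ∧ T.memUp I lam)
    (q : JX ⟶ W₂) (lam' : T.ext W₂ X) (hlam' : T.conf jX q lam' ∧ T.memUp I lam')
    -- the three cones
    {Ca Ca' Ca'' : C}
    (b : Y ⊞ IX ⟶ Ca) (δ : T.ext Ca X)
    (hca : T.conf (biprod.lift a iX) b δ ∧ T.memUp I δ)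
    (b' : Y ⊞ JX ⟶ Ca') (δ' : T.ext Ca' X)
    (hca' : T.conf (biprod.lift a jX) b' δ' ∧ T.memUp I δ')
    (b'' : Y ⊞ (IX ⊞ JX) ⟶ Ca'') (δ'' : T.ext Ca'' X)
    (hca'' : T.conf (biprod.lift a (biprod.lift iX jX)) b'' δ'' ∧ T.memUp I δ'') :
    Nonempty (Ca'' ≅ Ca ⊞ JX) ∧ Nonempty (Ca'' ≅ Ca' ⊞ IX) :=
  statement8_general T I a hIX hJX iX hiX jX hjX b δ hca b' δ' hca' b'' δ'' hca''
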